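/- The rule Lift is admissible in APCP: if P ⊢ Ω; Γ is derivable and t ∈ ℕ, then P ⊢ Ω; ↑^t Γ is derivable, where ↑^t Γ lifts all priorities in all types of Γ by t. -/

import Mathlib

/-- Endpoint/channel names. -/
abbrev Name := ℕ

/-- Priorities: natural numbers together with the ultimate priority `ω = ⊤`. -/
abbrev Prio := ℕ∞

/-- APCP session types. Labelled choices `⊕^o{i:A_i}_{i∈I}` and `&^o{i:A_i}_{i∈I}`
are represented with label set `I = Fin n`. Recursion variables are named. -/
inductive SType : Type where
  | tensor : Prio → SType → SType → SType                 -- A ⊗^o B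
  | par    : Prio → SType → SType → SType                 -- A ⅋^o B
  | plus   : Prio → (n : ℕ) → (Fin n → SType) → SType     -- ⊕^o{i:A_i}
  | withBr : Prio → (n : ℕ) → (Fin n → SType) → SType     -- &^o{i:A_i}
  | bullet : SType                                        -- •
  | mu     : ℕ → SType → SType                            -- μX.A
  | var    : ℕ → SType                                    -- X

namespace SType

/-- Duality of session types. -/
def dual : SType → SType
  | tensor o A B => par o A.dual B.dual
  | par o A B => tensor o A.dual B.dual
  | plus o n f => withBr o n (fun i => (f i).dual)
  | withBr o n f => plus o n (fun i => (f i).dual)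
  | bullet => bullet
  | mu X A => mu X A.dual
  | var X => var X

/-- The priority `pr(A)` of a session type. -/
def pr : SType → Prio
  | tensor o _ _ => o
  | par o _ _ => o
  | plus o _ _ => o
  | withBr o _ _ => o
  | bullet => ⊤
  | mu _ A => A.pr
  | var _ => ⊤

/-- The lift `↑^t A` of a session type by `t ∈ ℕ`. -/
def lift (t : ℕ) : SType → SType
  | tensor o A B => tensor (o + (t : Prio)) (A.lift t) (B.lift t)
  | par o A B => par (o + (t : Prio)) (A.lift t) (B.lift t)
  | plus o n f => plus (o + (t : Prio)) n (fun i => (f i).lift t)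
  | withBr o n f => withBr (o + (t : Prio)) n (fun i => (f i).lift t)
  | bullet => bullet
  | mu X A => mu X (A.lift t)
  | var X => var X

end SType
/-- Type substitution `A[B/X]` (substituting `B` for the recursion variable `X`). -/
def SType.tsubst (X : ℕ) (B : SType) : SType → SType
  | .tensor o A C => .tensor o (tsubst X B A) (tsubst X B C)
  | .par o A C => .par o (tsubst X B A) (tsubst X B C)
  | .plus o n f => .plus o n (fun i => tsubst X B (f i))
  | .withBr o n f => .withBr o n (fun i => tsubst X B (f i))
  | .bullet => .bullet
  | .mu Y A => if Y = X then .mu Y A else .mu Y (tsubst X B A)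
  | .var Y => if Y = X then B else .var Y

/-- Equi-recursive identification of session types: a recursive type equals its
priority-lifted unfoldings `μX.A = A[↑^t μX.A / X]` (congruently closed). -/
inductive TypeEquiv : SType → SType → Prop where
  | refl (A : SType) : TypeEquiv A A
  | symm : TypeEquiv A B → TypeEquiv B A
  | trans : TypeEquiv A B → TypeEquiv B C → TypeEquiv A C
  | unfold (X : ℕ) (A : SType) (t : ℕ) :
      TypeEquiv (.mu X A) (A.tsubst X ((SType.mu X A).lift t))
  | tensor : TypeEquiv A A' → TypeEquiv B B' → TypeEquiv (.tensor o A B) (.tensor o A' B')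
  | par : TypeEquiv A A' → TypeEquiv B B' → TypeEquiv (.par o A B) (.par o A' B')
  | plus {n} {f g : Fin n → SType} : (∀ i, TypeEquiv (f i) (g i)) →
      TypeEquiv (.plus o n f) (.plus o n g)
  | withBr {n} {f g : Fin n → SType} : (∀ i, TypeEquiv (f i) (g i)) →
      TypeEquiv (.withBr o n f) (.withBr o n g)
  | mu : TypeEquiv A B → TypeEquiv (.mu X A) (.mu X B)

/-- APCP processes. Branching is indexed by `Fin n`; selection labels are the
corresponding natural numbers. Recursion variables `X` are named (`ℕ`). -/
inductive Proc : Type where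
  | output : Name → Name → Name → Proc                 -- x[y,z]
  | input  : Name → Name → Name → Proc → Proc          -- x(y,z);P
  | select : Name → Name → ℕ → Proc                    -- x[z]◁i
  | branch : Name → Name → (n : ℕ) → (Fin n → Proc) → Proc  -- x(z)▷{i:P_i}
  | res    : Name → Name → Proc → Proc                 -- ν(xy)P
  | par    : Proc → Proc → Proc                        -- P ‖ Q
  | nil    : Proc                                      -- 0
  | fwd    : Name → Name → Proc                        -- x↔y
  | recP   : ℕ → List Name → Proc → Proc               -- μX(x̃);P
  | call   : ℕ → List Name → Proc                      -- X⟨x̃⟩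

/-- The name substitution `{b/a}` (mapping `a` to `b`). -/
def subOne (a b : Name) : Name → Name := fun n => if n = a then b else n

/-- The simultaneous name substitution `{ỹ/x̃}` (mapping each `x_i` to `y_i`). -/
def msub (xs ys : List Name) : Name → Name := fun n =>
  match (xs.zip ys).find? (fun p => p.1 == n) with
  | some p => p.2
  | none => n

/-- Restrict a substitution to be the identity on the bound names `ys`. -/
def updQ (σ : Name → Name) (ys : List Name) : Name → Name :=
  fun n => if n ∈ ys then n else σ n

namespace Proc

/-- Application of a name substitution to the free names of a process
(`P{z/x}` is `P.subst (subOne x z)`). -/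
def subst (σ : Name → Name) : Proc → Proc
  | output x y z => output (σ x) (σ y) (σ z)
  | input x y z P => input (σ x) y z (P.subst (updQ σ [y, z]))
  | select x z i => select (σ x) (σ z) i
  | branch x z n Ps => branch (σ x) z n (fun i => (Ps i).subst (updQ σ [z]))
  | res x y P => res x y (P.subst (updQ σ [x, y]))
  | par P Q => par (P.subst σ) (Q.subst σ)
  | nil => nil
  | fwd x y => fwd (σ x) (σ y)
  | recP X xs P => recP X (xs.map σ) (P.subst σ)
  | call X xs => call X (xs.map σ)

/-- Free names `fn(P)`. -/
def fn : Proc → Finset Name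
  | output x y z => {x, y, z}
  | input x y z P => insert x (P.fn \ {y, z})
  | select x z _ => {x, z}
  | branch x z n Ps => insert x ((Finset.univ.biUnion fun i : Fin n => (Ps i).fn) \ {z})
  | res x y P => P.fn \ {x, y}
  | par P Q => P.fn ∪ Q.fn
  | nil => ∅
  | fwd x y => {x, y}
  | recP _ xs P => xs.toFinset ∪ P.fn
  | call _ xs => xs.toFinset

/-- All names of a process (free and bound). -/
def allNames : Proc → Finset Name
  | output x y z => {x, y, z}
  | input x y z P => {x, y, z} ∪ P.allNames
  | select x z _ => {x, z}
  | branch x z n Ps => {x, z} ∪ (Finset.univ.biUnion fun i : Fin n => (Ps i).allNames)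
  | res x y P => {x, y} ∪ P.allNames
  | par P Q => P.allNames ∪ Q.allNames
  | nil => ∅
  | fwd x y => {x, y}
  | recP _ xs P => xs.toFinset ∪ P.allNames
  | call _ xs => xs.toFinset

/-- Active names `an(P)`: free names used for unguarded actions. -/
def an : Proc → Finset Name
  | output x _ _ => {x}
  | input x _ _ _ => {x}
  | select x _ _ => {x}
  | branch x _ _ _ => {x}
  | res x y P => P.an \ {x, y}
  | par P Q => P.an ∪ Q.an
  | nil => ∅
  | fwd x y => {x, y}
  | recP _ _ P => P.an
  | call _ _ => ∅

/-- Unfolding of a recursive loop: `(unfold X xs body P)` replaces each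
recursive call `X⟨ỹ⟩` (with `|ỹ| = |x̃|`) in `P` by `μX(ỹ); body{ỹ/x̃}`. -/
def unfold (X : ℕ) (xs : List Name) (body : Proc) : Proc → Proc
  | output a b c => output a b c
  | input a b c P => input a b c (unfold X xs body P)
  | select a b i => select a b i
  | branch a b n Ps => branch a b n (fun i => unfold X xs body (Ps i))
  | res a b P => res a b (unfold X xs body P)
  | par P Q => par (unfold X xs body P) (unfold X xs body Q)
  | nil => nil
  | fwd a b => fwd a b
  | recP Y ys P => recP Y ys (if Y = X then P else unfold X xs body P)
  | call Y ys =>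
      if Y = X ∧ ys.length = xs.length then recP X ys (body.subst (msub xs ys))
      else call Y ys

end Proc

/-- Structural congruence `P ≡ Q`: the smallest congruence on processes
satisfying the APCP axioms (including α-equivalence, generated by fresh
renaming of bound names, and equi-recursive unfolding of recursive loops). -/
inductive SC : Proc → Proc → Prop where
  -- equivalence
  | refl (P : Proc) : SC P P
  | symm : SC P Q → SC Q P
  | trans : SC P Q → SC Q R → SC P R
  -- congruence (compatibility with all process constructors)
  | inputC : SC P P' → SC (.input x y z P) (.input x y z P')
  | branchC {n} {Ps Ps' : Fin n → Proc} : (∀ i, SC (Ps i) (Ps' i)) →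
      SC (.branch x z n Ps) (.branch x z n Ps')
  | resC : SC P P' → SC (.res x y P) (.res x y P')
  | parC : SC P P' → SC Q Q' → SC (.par P Q) (.par P' Q')
  | recC : SC P P' → SC (.recP X xs P) (.recP X xs P')
  -- α-equivalence (fresh renaming of bound names)
  | alphaInput : y' ∉ Proc.allNames P → z' ∉ Proc.allNames P → y' ≠ z' →
      SC (.input x y z P) (.input x y' z' (P.subst (msub [y, z] [y', z'])))
  | alphaBranch {n} {Ps : Fin n → Proc} :
      z' ∉ (Finset.univ.biUnion fun i : Fin n => (Ps i).allNames) →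
      SC (.branch x z n Ps) (.branch x z' n (fun i => (Ps i).subst (subOne z z')))
  | alphaRes : x' ∉ Proc.allNames P → y' ∉ Proc.allNames P → x' ≠ y' →
      SC (.res x y P) (.res x' y' (P.subst (msub [x, y] [x', y'])))
  -- axioms
  | fwdSymm : SC (.fwd x y) (.fwd y x)
  | parComm : SC (.par P Q) (.par Q P)
  | parNil : SC (.par P .nil) P
  | parAssoc : SC (.par P (.par Q R)) (.par (.par P Q) R)
  | resFwd : SC (.res x y (.fwd x y)) .nil
  | scopeExt : x ∉ Proc.fn P → y ∉ Proc.fn P →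
      SC (.par P (.res x y Q)) (.res x y (.par P Q))
  | resNil : SC (.res x y .nil) .nil
  | resSwap : SC (.res x y P) (.res y x P)
  | resComm : SC (.res x y (.res z w P)) (.res z w (.res x y P))
  | unfoldRec : SC (.recP X xs P) (Proc.unfold X xs P P)

/-- Composition of a list of restrictions: `ν(ṽw̃)P`. -/
def resList (l : List (Name × Name)) (P : Proc) : Proc :=
  l.foldr (fun p Q => .res p.1 p.2 Q) P

/-- The reduction relation `P ⟶ Q` (synchronizations β piped with commuting
conversions κ, closed under ≡, restriction, and parallel composition). -/
inductive Red : Proc → Proc → Prop where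
  | betaId : z ≠ x → y ≠ x →
      Red (.res y z (.par (.fwd x y) P)) (P.subst (subOne z x))
  | betaTensorPar :
      Red (.res x y (.par (.output x a b) (.input y v z P)))
          (P.subst (msub [v, z] [a, b]))
  | betaPlusWith {n} {Ps : Fin n → Proc} (j : Fin n) :
      Red (.res x y (.par (.select x b j.val) (.branch y z n Ps)))
          ((Ps j).subst (subOne z b))
  | kappaPar (l : List (Name × Name)) : (∀ p ∈ l, x ≠ p.1 ∧ x ≠ p.2) →
      Red (resList l (.par (.input x y z P) Q))
          (.input x y z (resList l (.par P Q)))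
  | kappaWith {n} {Ps : Fin n → Proc} (l : List (Name × Name)) :
      (∀ p ∈ l, x ≠ p.1 ∧ x ≠ p.2) →
      Red (resList l (.par (.branch x z n Ps) Q))
          (.branch x z n (fun i => resList l (.par (Ps i) Q)))
  | equivC : SC P P' → Red P' Q' → SC Q' Q → Red P Q
  | resR : Red P Q → Red (.res x y P) (.res x y Q)
  | parR : Red P Q → Red (.par P R) (.par Q R)

/-- β-reduction `P ⟶_β Q`: reduction derived from the synchronization axioms
only, closed under ≡, restriction, and parallel composition. -/
inductive RedBeta : Proc → Proc → Prop where
  | betaId : z ≠ x → y ≠ x →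
      RedBeta (.res y z (.par (.fwd x y) P)) (P.subst (subOne z x))
  | betaTensorPar :
      RedBeta (.res x y (.par (.output x a b) (.input y v z P)))
          (P.subst (msub [v, z] [a, b]))
  | betaPlusWith {n} {Ps : Fin n → Proc} (j : Fin n) :
      RedBeta (.res x y (.par (.select x b j.val) (.branch y z n Ps)))
          ((Ps j).subst (subOne z b))
  | equivC : SC P P' → RedBeta P' Q' → SC Q' Q → RedBeta P Q
  | resR : RedBeta P Q → RedBeta (.res x y P) (.res x y Q)
  | parR : RedBeta P Q → RedBeta (.par P R) (.par Q R)

/-- The least priority `pr(Γ)` among the types in a typing context. -/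
noncomputable def ctxPr (Γ : List (Name × SType)) : Prio :=
  Γ.foldr (fun p acc => min p.2.pr acc) ⊤

/-- The typing judgment `P ⊢ Ω; Γ` of APCP. `Ω` assigns arities to recursion
variables (with weakening and contraction); `Γ` is the linear typing context
(with exchange). Recursive types are identified equi-recursively with their
priority-lifted unfoldings (rule `tyEq`). -/
inductive Typed : Proc → List (ℕ × ℕ) → List (Name × SType) → Prop where
  | empty : Typed .nil Ω []
  | bul : Typed P Ω Γ → x ∉ Γ.map Prod.fst → Typed P Ω ((x, .bullet) :: Γ)
  | id : x ≠ y → Typed (.fwd x y) Ω [(x, A.dual), (y, A)]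
  | mix : Typed P Ω Γ → Typed Q Ω Δ →
      List.Disjoint (Γ.map Prod.fst) (Δ.map Prod.fst) →
      Typed (.par P Q) Ω (Γ ++ Δ)
  | cycle : Typed P Ω ((x, A) :: (y, A.dual) :: Γ) → Typed (.res x y P) Ω Γ
  | tensor : x ≠ y → x ≠ z → y ≠ z →
      Typed (.output x y z) Ω [(x, .tensor o A B), (y, A.dual), (z, B.dual)]
  | parR : Typed P Ω ((y, A) :: (z, B) :: Γ) → o < ctxPr Γ → x ∉ Γ.map Prod.fst →
      Typed (.input x y z P) Ω ((x, .par o A B) :: Γ)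
  | plusR {n} {As : Fin n → SType} (j : Fin n) : x ≠ z →
      Typed (.select x z j.val) Ω [(x, .plus o n As), (z, (As j).dual)]
  | withR {n} {As : Fin n → SType} {Ps : Fin n → Proc} :
      (∀ i : Fin n, Typed (Ps i) Ω ((z, As i) :: Γ)) → o < ctxPr Γ →
      x ∉ Γ.map Prod.fst →
      Typed (.branch x z n Ps) Ω ((x, .withBr o n As) :: Γ)
  | recR : Typed P ((X, xs.length) :: Ω) (xs.zip As) → xs.length = As.length →
      (∀ A ∈ As, A ≠ .var X) →
      Typed (.recP X xs P) Ω (xs.zip (As.map (.mu X)))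
  | varR : (X, xs.length) ∈ Ω →
      Typed (.call X xs) Ω (xs.map fun x => (x, SType.var X))
  | exch : Typed P Ω Γ → Γ.Perm Γ' → Typed P Ω Γ'
  | tyEq : Typed P Ω Γ →
      List.Forall₂ (fun p q => p.1 = q.1 ∧ TypeEquiv p.2 q.2) Γ Γ' →
      Typed P Ω Γ'

/-- Lift `↑^t Γ` of all (priorities of) types in a typing context. -/
def ctxLift (t : ℕ) (Γ : List (Name × SType)) : List (Name × SType) :=
  Γ.map fun p => (p.1, p.2.lift t)

/-- A process is live if it is equivalent to a restriction on a pair of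
active names. -/
def Live (P : Proc) : Prop :=
  ∃ x y P', SC P (.res x y P') ∧ x ∈ Proc.an P' ∧ y ∈ Proc.an P'

/-- `P` contains no actions or prefixes whatsoever: no output, input,
selection, or branching subterms. -/
def Proc.noActions : Proc → Prop
  | .output _ _ _ => False
  | .input _ _ _ _ => False
  | .select _ _ _ => False
  | .branch _ _ _ _ => False
  | .res _ _ P => P.noActions
  | .par P Q => P.noActions ∧ Q.noActions
  | .recP _ _ P => P.noActions
  | .nil => True
  | .fwd _ _ => True
  | .call _ _ => True


/-! Lifting commutes with every operation on types, because it only touches priority annotations,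
which duality, substitution and unfolding carry along unchanged; and it shifts `pr(Γ)` by exactly
`t`, so the side conditions `o < pr(Γ)` of the ⅋ and & rules survive. Every typing rule is
therefore preserved, and admissibility follows by induction on the derivation. -/

namespace SType

@[simp]
theorem dual_lift (t : ℕ) (A : SType) : A.dual.lift t = (A.lift t).dual := by
  induction A with
  | plus o n f ih | withBr o n f ih => simp only [dual, lift, ih]
  | _ => simp_all [dual, lift]

theorem lift_lift (s t : ℕ) (A : SType) : (A.lift s).lift t = A.lift (s + t) := by
  induction A with
  | plus o n f ih | withBr o n f ih => simp only [lift, ih, Nat.cast_add, add_assoc]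
  | _ => simp_all [lift, add_assoc]

theorem pr_lift (t : ℕ) (A : SType) : (A.lift t).pr = A.pr + t := by
  induction A <;> simp_all [lift, pr]

theorem tsubst_lift (t X : ℕ) (B A : SType) :
    (tsubst X B A).lift t = tsubst X (B.lift t) (A.lift t) := by
  induction A with
  | plus o n f ih | withBr o n f ih => simp only [tsubst, lift, ih]
  | mu Y A ih => by_cases hY : Y = X <;> simp [tsubst, lift, hY, ih]
  | var Y => by_cases hY : Y = X <;> simp [tsubst, lift, hY]
  | _ => simp_all [tsubst, lift]

theorem lift_ne_var {t X : ℕ} {A : SType} (hA : A ≠ .var X) : A.lift t ≠ .var X := by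
  cases A <;> simp_all [lift]

end SType

theorem TypeEquiv.lift (t : ℕ) {A B : SType} (h : TypeEquiv A B) :
    TypeEquiv (A.lift t) (B.lift t) := by
  induction h with
  | refl A => exact .refl _
  | symm _ ih => exact ih.symm
  | trans _ _ ih₁ ih₂ => exact ih₁.trans ih₂
  | unfold X A s =>
    -- the lifts `↑^s` of the unfolding and `↑^t` of the whole type commute
    rw [SType.tsubst_lift, SType.lift_lift, Nat.add_comm, ← SType.lift_lift]
    exact .unfold X (A.lift t) s
  | tensor _ _ ih₁ ih₂ => exact .tensor ih₁ ih₂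
  | par _ _ ih₁ ih₂ => exact .par ih₁ ih₂
  | plus _ ih => exact .plus ih
  | withBr _ ih => exact .withBr ih
  | mu _ ih => exact .mu ih

section ctxLift

variable (t : ℕ)

@[simp]
theorem ctxLift_nil : ctxLift t [] = [] := rfl

@[simp]
theorem ctxLift_cons (x : Name) (A : SType) (Γ : List (Name × SType)) :
    ctxLift t ((x, A) :: Γ) = (x, A.lift t) :: ctxLift t Γ := rfl

theorem ctxLift_append (Γ Δ : List (Name × SType)) :
    ctxLift t (Γ ++ Δ) = ctxLift t Γ ++ ctxLift t Δ :=
  List.map_append ..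

@[simp]
theorem map_fst_ctxLift (Γ : List (Name × SType)) :
    (ctxLift t Γ).map Prod.fst = Γ.map Prod.fst := by
  simp [ctxLift]

theorem ctxPr_ctxLift (Γ : List (Name × SType)) : ctxPr (ctxLift t Γ) = ctxPr Γ + t := by
  induction Γ with
  | nil => simp [ctxPr]
  | cons p Γ ih =>
    simp only [ctxLift, ctxPr, List.map_cons, List.foldr_cons] at ih ⊢
    rw [SType.pr_lift, ih, min_add_add_right]

theorem lt_ctxPr_ctxLift {o : Prio} {Γ : List (Name × SType)} (h : o < ctxPr Γ) :
    o + t < ctxPr (ctxLift t Γ) := by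
  rw [ctxPr_ctxLift]
  exact WithTop.add_lt_add_right (WithTop.natCast_ne_top t) h

theorem ctxLift_zip (xs : List Name) (As : List SType) :
    ctxLift t (xs.zip As) = xs.zip (As.map (SType.lift t)) := by
  simp [ctxLift, List.zip_map_right]

theorem ctxLift_var (X : ℕ) (xs : List Name) :
    ctxLift t (xs.map fun x => (x, SType.var X)) = xs.map fun x => (x, SType.var X) := by
  simp [ctxLift, SType.lift]

theorem Forall₂_ctxLift {Γ Γ' : List (Name × SType)}
    (h : List.Forall₂ (fun p q => p.1 = q.1 ∧ TypeEquiv p.2 q.2) Γ Γ') :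
    List.Forall₂ (fun p q => p.1 = q.1 ∧ TypeEquiv p.2 q.2) (ctxLift t Γ) (ctxLift t Γ') :=
  List.forall₂_map_left_iff.2 <| List.forall₂_map_right_iff.2 <|
    h.imp fun _ _ hpq => ⟨hpq.1, hpq.2.lift t⟩

end ctxLift

/-- the rule Lift is admissible in APCP. -/
theorem Typed.lift_admissible
    (P : Proc) (Ω : List (ℕ × ℕ)) (Γ : List (Name × SType)) (t : ℕ)
    (h : Typed P Ω Γ) : Typed P Ω (ctxLift t Γ) := by
  induction h with
  | empty => exact .empty
  | bul _ hx ih => exact .bul ih (by simpa using hx)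
  | id hxy => simpa using Typed.id hxy
  | mix _ _ hdisj ih₁ ih₂ => exact ctxLift_append t .. ▸ .mix ih₁ ih₂ (by simpa using hdisj)
  | cycle _ ih => exact .cycle (by simpa using ih)
  | tensor hxy hxz hyz => simpa [SType.lift] using Typed.tensor hxy hxz hyz
  | parR _ ho hx ih =>
    simpa [SType.lift] using
      Typed.parR (by simpa using ih) (lt_ctxPr_ctxLift t ho) (by simpa using hx)
  | plusR j hxz => simpa [SType.lift] using Typed.plusR j hxz
  | withR _ ho hx ih =>
    simpa [SType.lift] using
      Typed.withR (fun i => by simpa using ih i) (lt_ctxPr_ctxLift t ho) (by simpa using hx)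
  | recR _ hlen hnv ih =>
    rw [ctxLift_zip] at ih ⊢
    simpa [Function.comp_def, SType.lift] using Typed.recR ih (by simpa using hlen)
      (by simpa using fun A hA => SType.lift_ne_var (hnv A hA))
  | varR hmem =>
    rw [ctxLift_var]
    exact .varR hmem
  | exch _ hperm ih => exact .exch ih (hperm.map _)
  | tyEq _ hf ih => exact .tyEq ih (Forall₂_ctxLift t hf)
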